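/- Let (F_t)_{t≥0} be a continuous one-parameter semigroup on Δ with Denjoy–Wolff point τ = 1 whose generator f has no zeros in Δ and admits the representation f(z) = b(z−1)² + c(z−1)³ + R₁(z), where b, c ∈ ℂ, b ≠ 0, and lim_{z→1, z∈Δ} R₁(z)/(z−1)^{3+ε} = 0 for some ε > 0. Let h be the Koenigs function of f. Then there exists a constant A ∈ ℂ, independent of z, such that for every z ∈ Δ, lim_{t→∞} ( 1/(1 − F_t(z)) + bt + (c/b)·log(t+1) + b·h(z) ) = A. -/

import Mathlib

/-!
Along a trajectory `w_t = F_t z` the Koenigs function grows linearly: `h (w_t) = h z + t`.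
Removing the singular part of `h` at `1`, the function
`H = h + 1 / (b (1 - ζ)) - (c / b²) log (1 - ζ)` has derivative `O(|1 - ζ| ^ (α - 1))` with
`α = min ε 1 > 0`. This is integrable along the radius ending at `1`, and the chord from `w` to the
radius point `1 - |1 - w|` stays at distance at least `|1 - w| / 2` from `1`, so `H` has a limit `C`
at `1`. Solving `h (w_t) = h z + t` for `1 / (1 - w_t)` gives `(t + 1) (1 - w_t) → -1 / b`, and
`1 / (1 - w_t) + b t + (c / b) log (t + 1) + b h z = b H (w_t) + (c / b) log ((t + 1) (1 - w_t))`,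
which tends to `b C + (c / b) log (-1 / b)`.
-/

open Complex Filter Topology Set MeasureTheory

noncomputable section

/-- The open unit disk in the complex plane. -/
def unitDisk : Set ℂ := {z : ℂ | ‖z‖ < 1}

/-- A continuous one-parameter semigroup `F` on the unit disk with
(infinitesimal) generator `f`: each `F t` is a holomorphic self-map of the disk,
`F 0 = id`, `F (t+s) = F t ∘ F s`, and for each `z` in the disk the trajectory
`t ↦ F t z` solves `∂F_t(z)/∂t + f(F_t(z)) = 0`. -/
structure IsContinuousSemigroupOnDisk (F : ℝ → ℂ → ℂ) (f : ℂ → ℂ) : Prop where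
  mapsTo : ∀ t : ℝ, 0 ≤ t → Set.MapsTo (F t) unitDisk unitDisk
  holomorphic : ∀ t : ℝ, 0 ≤ t → DifferentiableOn ℂ (F t) unitDisk
  init : ∀ z ∈ unitDisk, F 0 z = z
  semigroup : ∀ t s : ℝ, 0 ≤ t → 0 ≤ s → ∀ z ∈ unitDisk, F (t + s) z = F t (F s z)
  gen_holomorphic : DifferentiableOn ℂ f unitDisk
  ode : ∀ z ∈ unitDisk, ∀ t : ℝ, 0 ≤ t →
    HasDerivWithinAt (fun s : ℝ => F s z) (-(f (F t z))) (Set.Ici (0 : ℝ)) t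

/-- The semigroup has Denjoy–Wolff point `τ = 1`. -/
def HasDWPointOne (F : ℝ → ℂ → ℂ) : Prop :=
  ∀ z ∈ unitDisk, Tendsto (fun t : ℝ => F t z) atTop (𝓝 (1 : ℂ))

/-- `h` is the Koenigs function of the generator `f`: `h' = -1/f` on the disk and `h 0 = 0`. -/
def IsKoenigsFunction (f h : ℂ → ℂ) : Prop :=
  (∀ z ∈ unitDisk, HasDerivAt h (-(1 / f z)) z) ∧ h 0 = 0

lemma unitDisk_eq_ball : unitDisk = Metric.ball (0 : ℂ) 1 := by
  ext z; simp [unitDisk]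

lemma one_sub_ne_zero_of_mem_unitDisk {w : ℂ} (hw : w ∈ unitDisk) : 1 - w ≠ 0 := by
  rintro h
  simp [unitDisk, show w = 1 by linear_combination -h] at hw

lemma re_one_sub_pos_of_mem_unitDisk {w : ℂ} (hw : w ∈ unitDisk) : 0 < (1 - w).re := by
  have : w.re < 1 := (re_le_norm w).trans_lt hw
  simp only [sub_re, one_re]
  linarith

lemma one_sub_ofReal_mem_unitDisk {s : ℝ} (hs₀ : 0 < s) (hs₂ : s < 2) :
    1 - (s : ℂ) ∈ unitDisk := by
  rw [unitDisk, mem_ofPred_eq, ← ofReal_one, ← ofReal_sub, norm_real, Real.norm_eq_abs, abs_lt]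
  constructor <;> linarith

lemma nhdsWithin_unitDisk_one_neBot : (𝓝[unitDisk] (1 : ℂ)).NeBot := by
  rw [← mem_closure_iff_nhdsWithin_neBot, unitDisk_eq_ball, closure_ball _ one_ne_zero]
  simp

lemma eventually_norm_one_sub_lt {δ : ℝ} (hδ : 0 < δ) : ∀ᶠ w in 𝓝 (1 : ℂ), ‖1 - w‖ < δ := by
  filter_upwards [Metric.ball_mem_nhds 1 hδ] with w hw
  rwa [norm_sub_rev, ← dist_eq_norm]

lemma mem_slitPlane_of_re_nonneg {z : ℂ} (hre : 0 ≤ z.re) (hz : z ≠ 0) : z ∈ slitPlane := by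
  rcases hre.lt_or_eq with hre | hre
  · exact mem_slitPlane_iff.mpr (Or.inl hre)
  · refine mem_slitPlane_iff.mpr (Or.inr fun him => hz ?_)
    exact Complex.ext hre.symm him

lemma norm_log_le (z : ℂ) : ‖log z‖ ≤ |Real.log ‖z‖| + Real.pi := by
  calc ‖log z‖ ≤ |(log z).re| + |(log z).im| := norm_le_abs_re_add_abs_im _
    _ ≤ |Real.log ‖z‖| + Real.pi := by
      rw [log_re, log_im]
      gcongr
      exact abs_arg_le_pi z

lemma tendsto_mul_log_nhds_zero : Tendsto (fun z : ℂ => z * log z) (𝓝 0) (𝓝 0) := by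
  have hbound : Continuous fun z : ℂ => |‖z‖ * Real.log ‖z‖| + Real.pi * ‖z‖ := by fun_prop
  refine squeeze_zero_norm (a := fun z : ℂ => |‖z‖ * Real.log ‖z‖| + Real.pi * ‖z‖)
    (fun z => ?_) (by simpa using hbound.tendsto 0)
  calc ‖z * log z‖ ≤ ‖z‖ * (|Real.log ‖z‖| + Real.pi) := by
        rw [norm_mul]; gcongr; exact norm_log_le z
    _ = |‖z‖ * Real.log ‖z‖| + Real.pi * ‖z‖ := by
        rw [abs_mul, abs_norm]; ring

theorem IsKoenigsFunction.comp_semigroup {F : ℝ → ℂ → ℂ} {f h : ℂ → ℂ}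
    (hsg : IsContinuousSemigroupOnDisk F f) (hnz : ∀ z ∈ unitDisk, f z ≠ 0)
    (hK : IsKoenigsFunction f h) {z : ℂ} (hz : z ∈ unitDisk) {t : ℝ} (ht : 0 ≤ t) :
    h (F t z) = h z + t := by
  have hmem : ∀ s ∈ Icc (0 : ℝ) t, F s z ∈ unitDisk := fun s hs => hsg.mapsTo s hs.1 hz
  refine eq_of_has_deriv_right_eq (a := 0) (b := t) (f := fun s => h (F s z))
    (g := fun s : ℝ => h z + s) (f' := fun _ => 1) ?_ ?_ ?_ ?_ ?_ t ⟨ht, le_rfl⟩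
  · intro s hs
    have hd := (hK.1 _ (hmem s (Ico_subset_Icc_self hs))).comp_hasDerivWithinAt s
      ((hsg.ode z hz s hs.1).mono (Ici_subset_Ici.mpr hs.1))
    refine hd.congr_deriv ?_
    rw [neg_mul_neg, one_div, inv_mul_cancel₀ (hnz _ (hmem s (Ico_subset_Icc_self hs)))]
  · intro s _
    simpa using ((ofRealCLM.hasDerivAt (x := s)).const_add (h z)).hasDerivWithinAt
  · intro s hs
    exact (hK.1 _ (hmem s hs)).continuousAt.comp_continuousWithinAt (f := fun s : ℝ => F s z)
      ((hsg.ode z hz s hs.1).continuousWithinAt.mono Icc_subset_Ici_self)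
  · fun_prop
  · simp [hsg.init z hz]

-- The function `H` of the proof sketch.
def koenigsRegularPart (h : ℂ → ℂ) (b c : ℂ) (ζ : ℂ) : ℂ :=
  h ζ + 1 / (b * (1 - ζ)) - c / b ^ 2 * log (1 - ζ)

lemma hasDerivAt_koenigsRegularPart {f h : ℂ → ℂ} {b : ℂ} (c : ℂ) (hb : b ≠ 0)
    (hK : IsKoenigsFunction f h) {w : ℂ} (hw : w ∈ unitDisk) :
    HasDerivAt (koenigsRegularPart h b c)
      (-(1 / f w) + 1 / (b * (1 - w) ^ 2) + c / (b ^ 2 * (1 - w))) w := by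
  have hne := one_sub_ne_zero_of_mem_unitDisk hw
  have hsub : HasDerivAt (fun ζ : ℂ => 1 - ζ) (-1) w := by
    simpa using (hasDerivAt_id w).const_sub 1
  have hpole : HasDerivAt (fun ζ : ℂ => 1 / (b * (1 - ζ))) (1 / (b * (1 - w) ^ 2)) w := by
    refine ((hasDerivAt_const w 1).div (hsub.const_mul b) (mul_ne_zero hb hne)).congr_deriv ?_
    field_simp
    ring
  have hlog : HasDerivAt (fun ζ : ℂ => log (1 - ζ)) (-(1 - w)⁻¹) w := by
    refine ((hasDerivAt_log (mem_slitPlane_iff.mpr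
      (Or.inl (re_one_sub_pos_of_mem_unitDisk hw)))).comp w hsub).congr_deriv ?_
    ring
  refine ((hK.1 w hw).add hpole |>.sub (hlog.const_mul (c / b ^ 2))).congr_deriv ?_
  field_simp
  ring

lemma half_mul_norm_sq_le_norm {b c u fv : ℂ} (hu_small : ‖u‖ * (2 * (‖c‖ + 1)) ≤ ‖b‖)
    (hR : ‖fv - b * u ^ 2 + c * u ^ 3‖ ≤ ‖u‖ ^ 3) :
    ‖b‖ * ‖u‖ ^ 2 / 2 ≤ ‖fv‖ := by
  have : ‖b * u ^ 2‖ ≤ ‖fv‖ + ‖c * u ^ 3‖ + ‖fv - b * u ^ 2 + c * u ^ 3‖ := by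
    calc ‖b * u ^ 2‖ = ‖fv + c * u ^ 3 - (fv - b * u ^ 2 + c * u ^ 3)‖ := by ring_nf
      _ ≤ _ := norm_sub_le_of_le (norm_add_le _ _) le_rfl
  simp only [norm_mul, norm_pow] at this
  nlinarith [sq_nonneg ‖u‖]

lemma neg_one_div_add_eq_div {b c u fv : ℂ} (hb : b ≠ 0) (hu : u ≠ 0) (hfv : fv ≠ 0) :
    -(1 / fv) + 1 / (b * u ^ 2) + c / (b ^ 2 * u) =
      (-(c ^ 2 * u ^ 4) + (b + c * u) * (fv - b * u ^ 2 + c * u ^ 3)) / (b ^ 2 * u ^ 2 * fv) := by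
  field_simp
  ring

-- The derivative estimate at a single point, with `u = 1 - w` and `fv = f w`.
lemma norm_deriv_koenigsRegularPart_le {b c u fv : ℂ} {ε : ℝ} (hb : b ≠ 0) (hε : 0 < ε)
    (hu : u ≠ 0) (hu₁ : ‖u‖ ≤ 1) (hu_small : ‖u‖ * (2 * (‖c‖ + 1)) ≤ ‖b‖)
    (hR : ‖fv - b * u ^ 2 + c * u ^ 3‖ ≤ ‖u‖ ^ (3 + ε)) :
    ‖-(1 / fv) + 1 / (b * u ^ 2) + c / (b ^ 2 * u)‖ ≤
      2 * (‖c‖ ^ 2 + ‖b‖ + ‖c‖) / ‖b‖ ^ 3 * ‖u‖ ^ (min ε 1 - 1) := by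
  set r := ‖u‖ with hr
  set R := fv - b * u ^ 2 + c * u ^ 3 with hRdef
  have hr₀ : 0 < r := norm_pos_iff.mpr hu
  have hb₀ : 0 < ‖b‖ := norm_pos_iff.mpr hb
  have hR' : ‖R‖ ≤ r ^ (min ε 1 - 1) * r ^ 4 := by
    calc ‖R‖ ≤ r ^ (3 + ε) := hR
      _ ≤ r ^ (3 + min ε 1) := Real.rpow_le_rpow_of_exponent_ge hr₀ hu₁ (by simp)
      _ = r ^ (min ε 1 - 1) * r ^ 4 := by
        rw [← Real.rpow_natCast, ← Real.rpow_add hr₀]; norm_num; ring_nf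
  have hpow_ge_one : 1 ≤ r ^ (min ε 1 - 1) :=
    Real.one_le_rpow_of_pos_of_le_one_of_nonpos hr₀ hu₁ (by simp)
  have hfv : ‖b‖ * r ^ 2 / 2 ≤ ‖fv‖ := by
    refine half_mul_norm_sq_le_norm hu_small (hR.trans ?_)
    rw [← Real.rpow_natCast]
    exact Real.rpow_le_rpow_of_exponent_ge hr₀ hu₁ (by simp; linarith)
  have hfv₀ : fv ≠ 0 := norm_pos_iff.mp (lt_of_lt_of_le (by positivity) hfv)
  have hnum : ‖-(c ^ 2 * u ^ 4) + (b + c * u) * R‖ ≤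
      (‖c‖ ^ 2 + ‖b‖ + ‖c‖) * r ^ (min ε 1 - 1) * r ^ 4 := by
    calc ‖-(c ^ 2 * u ^ 4) + (b + c * u) * R‖ ≤ ‖c‖ ^ 2 * r ^ 4 + (‖b‖ + ‖c‖ * r) * ‖R‖ := by
          refine (norm_add_le _ _).trans (add_le_add (by simp [hr]) ?_)
          rw [norm_mul]
          gcongr
          exact (norm_add_le _ _).trans (by simp [hr])
      _ ≤ ‖c‖ ^ 2 * (r ^ (min ε 1 - 1) * r ^ 4) + (‖b‖ + ‖c‖) * (r ^ (min ε 1 - 1) * r ^ 4) := by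
          gcongr
          · exact le_mul_of_one_le_left (by positivity) hpow_ge_one
          · exact mul_le_of_le_one_right (norm_nonneg c) hu₁
      _ = _ := by ring
  rw [neg_one_div_add_eq_div hb hu hfv₀, norm_div]
  calc ‖-(c ^ 2 * u ^ 4) + (b + c * u) * R‖ / ‖b ^ 2 * u ^ 2 * fv‖
      ≤ (‖c‖ ^ 2 + ‖b‖ + ‖c‖) * r ^ (min ε 1 - 1) * r ^ 4 /
          (‖b‖ ^ 2 * r ^ 2 * (‖b‖ * r ^ 2 / 2)) := by
        rw [norm_mul, norm_mul, norm_pow, norm_pow, ← hr]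
        gcongr
    _ = 2 * (‖c‖ ^ 2 + ‖b‖ + ‖c‖) / ‖b‖ ^ 3 * r ^ (min ε 1 - 1) := by
        field_simp

lemma eventually_norm_remainder_le {f : ℂ → ℂ} {b c : ℂ} {ε : ℝ}
    (hrep : Tendsto
      (fun z : ℂ => (f z - b * (z - 1) ^ 2 - c * (z - 1) ^ 3) / (z - 1) ^ ((3 + ε : ℝ) : ℂ))
      (𝓝[unitDisk] (1 : ℂ)) (𝓝 0)) :
    ∀ᶠ w in 𝓝[unitDisk] (1 : ℂ), ‖f w - b * (1 - w) ^ 2 + c * (1 - w) ^ 3‖ ≤ ‖1 - w‖ ^ (3 + ε) := by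
  filter_upwards [hrep.norm.eventually (gt_mem_nhds (by norm_num : ‖(0 : ℂ)‖ < 1)),
    self_mem_nhdsWithin] with w hw hwD
  have hpos : 0 < ‖1 - w‖ ^ (3 + ε) :=
    Real.rpow_pos_of_pos (norm_pos_iff.mpr (one_sub_ne_zero_of_mem_unitDisk hwD)) _
  rw [norm_div, norm_cpow_real, norm_sub_rev w 1, div_lt_one hpos] at hw
  rw [show f w - b * (1 - w) ^ 2 + c * (1 - w) ^ 3 = f w - b * (w - 1) ^ 2 - c * (w - 1) ^ 3 by
    ring]
  exact hw.le

lemma deriv_koenigsRegularPart_isBigO {f : ℂ → ℂ} {b c : ℂ} {ε : ℝ} (hb : b ≠ 0) (hε : 0 < ε)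
    (hR : ∀ᶠ w in 𝓝[unitDisk] (1 : ℂ),
      ‖f w - b * (1 - w) ^ 2 + c * (1 - w) ^ 3‖ ≤ ‖1 - w‖ ^ (3 + ε)) :
    (fun w => -(1 / f w) + 1 / (b * (1 - w) ^ 2) + c / (b ^ 2 * (1 - w))) =O[𝓝[unitDisk] 1]
      fun w => ‖1 - w‖ ^ (min ε 1 - 1) := by
  have hsmall : 0 < ‖b‖ / (2 * (‖c‖ + 1)) := by
    have := norm_pos_iff.mpr hb
    positivity
  refine Asymptotics.IsBigO.of_bound (2 * (‖c‖ ^ 2 + ‖b‖ + ‖c‖) / ‖b‖ ^ 3) ?_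
  filter_upwards [hR, self_mem_nhdsWithin,
    nhdsWithin_le_nhds (eventually_norm_one_sub_lt one_pos),
    nhdsWithin_le_nhds (eventually_norm_one_sub_lt hsmall)] with w hRw hw hw₁ hw_small
  rw [Real.norm_of_nonneg (Real.rpow_nonneg (norm_nonneg _) _)]
  exact norm_deriv_koenigsRegularPart_le hb hε (one_sub_ne_zero_of_mem_unitDisk hw) hw₁.le
    ((lt_div_iff₀ (by positivity)).mp hw_small).le hRw

lemma norm_one_sub_lt_two {w : ℂ} (hw : w ∈ unitDisk) : ‖1 - w‖ < 2 :=
  (norm_sub_le 1 w).trans_lt (by rw [norm_one]; linarith [show ‖w‖ < 1 from hw])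

lemma norm_one_sub_mem_segment {w ζ : ℂ} (hw : w ∈ unitDisk)
    (hζ : ζ ∈ segment ℝ w (1 - (‖1 - w‖ : ℂ))) :
    ‖1 - w‖ / 2 ≤ ‖1 - ζ‖ ∧ ‖1 - ζ‖ ≤ ‖1 - w‖ := by
  obtain ⟨a, a', ha, ha', haa', rfl⟩ := hζ
  set r := ‖1 - w‖
  have hr : 0 ≤ r := norm_nonneg _
  have hsplit : 1 - (a • w + a' • (1 - (r : ℂ))) = a * (1 - w) + a' * r := by
    have haa'ℂ : (a : ℂ) + a' = 1 := by exact_mod_cast haa'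
    simp only [real_smul]
    linear_combination -haa'ℂ
  rw [hsplit]
  constructor
  · have hre := re_one_sub_pos_of_mem_unitDisk hw
    have hr2 : r ^ 2 = (1 - w).re ^ 2 + (1 - w).im ^ 2 := by
      rw [Complex.sq_norm, normSq_apply]; ring
    have hsq : (r / 2) ^ 2 ≤ ‖(a : ℂ) * (1 - w) + a' * r‖ ^ 2 := by
      rw [Complex.sq_norm, normSq_apply]
      simp only [add_re, add_im, re_ofReal_mul, im_ofReal_mul, ofReal_re, ofReal_im, mul_zero,
        add_zero]
      have hexpand : (a * (1 - w).re + a' * r) * (a * (1 - w).re + a' * r) +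
          a * (1 - w).im * (a * (1 - w).im) =
            (a ^ 2 + a' ^ 2) * r ^ 2 + 2 * a * a' * (1 - w).re * r := by
        linear_combination (-a ^ 2) * hr2
      rw [hexpand]
      have ha2 : 1 / 2 ≤ a ^ 2 + a' ^ 2 := by nlinarith [sq_nonneg (a - a')]
      -- the cross term is nonnegative because `1 - w` lies in the right half-plane
      nlinarith [mul_nonneg (mul_nonneg ha ha') (mul_nonneg hre.le hr), sq_nonneg r]
    exact (sq_le_sq₀ (by positivity) (norm_nonneg _)).mp hsq
  · calc ‖(a : ℂ) * (1 - w) + a' * r‖ ≤ a * r + a' * r := by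
          refine (norm_add_le _ _).trans_eq ?_
          simp [abs_of_nonneg ha, abs_of_nonneg ha', r]
      _ = r := by rw [← add_mul, haa', one_mul]

section BoundaryLimit

variable {H G : ℂ → ℂ} {M α ρ : ℝ}

lemma norm_sub_le_of_radial (hα : 0 < α) (hρ₂ : ρ ≤ 2)
    (hH : ∀ w ∈ unitDisk, HasDerivAt H (G w) w)
    (hG : ∀ w ∈ unitDisk, ‖1 - w‖ < ρ → ‖G w‖ ≤ M * ‖1 - w‖ ^ (α - 1))
    {a t : ℝ} (ha : 0 < a) (hat : a ≤ t) (ht : t < ρ) :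
    ‖H (1 - t) - H (1 - a)‖ ≤ M / α * t ^ α - M / α * a ^ α := by
  have hmem : ∀ s ∈ Icc a t, 1 - (s : ℂ) ∈ unitDisk := fun s hs =>
    one_sub_ofReal_mem_unitDisk (ha.trans_le hs.1) (by linarith [hs.2])
  have hnorm : ∀ s ∈ Icc a t, ‖1 - (1 - (s : ℂ))‖ = s := fun s hs => by
    simp [abs_of_pos (ha.trans_le hs.1)]
  have hderiv : ∀ s ∈ Icc a t,
      HasDerivAt (fun s : ℝ => H (1 - s) - H (1 - a)) (-G (1 - s)) s := by
    intro s hs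
    have hsub : HasDerivAt (fun ζ : ℂ => 1 - ζ) (-1) (s : ℂ) := by
      simpa using (hasDerivAt_id (s : ℂ)).const_sub 1
    have := ((hH _ (hmem s hs)).comp (s : ℂ) hsub).comp_ofReal.sub_const (H (1 - a))
    simpa using this
  have hbound : ∀ s ∈ Icc a t,
      HasDerivAt (fun s => M / α * s ^ α - M / α * a ^ α) (M * s ^ (α - 1)) s := by
    intro s hs
    refine (((Real.hasDerivAt_rpow_const (Or.inl (ha.trans_le hs.1).ne')).const_mul
      (M / α)).sub_const _).congr_deriv ?_
    field_simp
  refine image_norm_le_of_norm_deriv_right_le_deriv_boundary'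
    (fun s hs => (hderiv s hs).continuousAt.continuousWithinAt)
    (fun s hs => (hderiv s (Ico_subset_Icc_self hs)).hasDerivWithinAt) (by simp)
    (fun s hs => (hbound s hs).continuousAt.continuousWithinAt)
    (fun s hs => (hbound s (Ico_subset_Icc_self hs)).hasDerivWithinAt) ?_ ⟨hat, le_rfl⟩
  intro s hs
  have hs' := Ico_subset_Icc_self hs
  calc ‖-G (1 - s)‖ ≤ M * ‖1 - (1 - (s : ℂ))‖ ^ (α - 1) :=
        (norm_neg _).trans_le (hG _ (hmem s hs') (by rw [hnorm s hs']; linarith [hs.2]))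
    _ = M * s ^ (α - 1) := by rw [hnorm s hs']

lemma norm_sub_le_of_chord (hα : 0 ≤ α) (hα₁ : α ≤ 1) (hM : 0 ≤ M)
    (hH : ∀ w ∈ unitDisk, HasDerivAt H (G w) w)
    (hG : ∀ w ∈ unitDisk, ‖1 - w‖ < ρ → ‖G w‖ ≤ M * ‖1 - w‖ ^ (α - 1))
    {w : ℂ} (hw : w ∈ unitDisk) (hwρ : ‖1 - w‖ < ρ) :
    ‖H w - H (1 - ‖1 - w‖)‖ ≤ 4 * M * ‖1 - w‖ ^ α := by
  set r := ‖1 - w‖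
  have hr : 0 < r := norm_pos_iff.mpr (one_sub_ne_zero_of_mem_unitDisk hw)
  have hx : 1 - (r : ℂ) ∈ unitDisk := one_sub_ofReal_mem_unitDisk hr (norm_one_sub_lt_two hw)
  have hconv : Convex ℝ unitDisk := unitDisk_eq_ball ▸ convex_ball 0 1
  have hsub : segment ℝ w (1 - (r : ℂ)) ⊆ unitDisk := hconv.segment_subset hw hx
  have hGseg : ∀ ζ ∈ segment ℝ w (1 - (r : ℂ)), ‖G ζ‖ ≤ M * (r / 2) ^ (α - 1) := by
    intro ζ hζ
    obtain ⟨hlow, hup⟩ := norm_one_sub_mem_segment hw hζ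
    calc ‖G ζ‖ ≤ M * ‖1 - ζ‖ ^ (α - 1) := hG ζ (hsub hζ) (hup.trans_lt hwρ)
      _ ≤ M * (r / 2) ^ (α - 1) :=
        mul_le_mul_of_nonneg_left (Real.rpow_le_rpow_of_nonpos (half_pos hr) hlow (by linarith)) hM
  have hlen : ‖1 - (r : ℂ) - w‖ ≤ 2 * r := by
    calc ‖1 - (r : ℂ) - w‖ = ‖(1 - w) - r‖ := by ring_nf
      _ ≤ r + r := (norm_sub_le _ _).trans (by simp [r])
      _ = 2 * r := by ring
  have hmvt := (convex_segment w (1 - (r : ℂ))).norm_image_sub_le_of_norm_hasDerivWithin_le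
    (fun ζ hζ => (hH ζ (hsub hζ)).hasDerivWithinAt) hGseg
    (left_mem_segment ℝ _ _) (right_mem_segment ℝ _ _)
  rw [norm_sub_rev]
  calc ‖H (1 - r) - H w‖ ≤ M * (r / 2) ^ (α - 1) * (2 * r) :=
        hmvt.trans (by gcongr)
    _ = 4 * M * (r / 2) ^ α := by
        rw [Real.rpow_sub_one (by positivity)]
        field_simp
        ring
    _ ≤ 4 * M * r ^ α := by gcongr; linarith

lemma dist_le_of_norm_one_sub_lt (hα : 0 < α) (hα₁ : α ≤ 1) (hM : 0 ≤ M) (hρ₂ : ρ ≤ 2)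
    (hH : ∀ w ∈ unitDisk, HasDerivAt H (G w) w)
    (hG : ∀ w ∈ unitDisk, ‖1 - w‖ < ρ → ‖G w‖ ≤ M * ‖1 - w‖ ^ (α - 1))
    {δ : ℝ} (hδ : δ ≤ ρ) {w w' : ℂ} (hw : w ∈ unitDisk) (hw' : w' ∈ unitDisk)
    (hwδ : ‖1 - w‖ < δ) (hw'δ : ‖1 - w'‖ < δ) :
    dist (H w) (H w') ≤ (8 * M + M / α) * δ ^ α := by
  set r := ‖1 - w‖
  set r' := ‖1 - w'‖
  have hr : 0 < r := norm_pos_iff.mpr (one_sub_ne_zero_of_mem_unitDisk hw)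
  have hr' : 0 < r' := norm_pos_iff.mpr (one_sub_ne_zero_of_mem_unitDisk hw')
  have hpow : ∀ s, 0 < s → s < δ → s ^ α ≤ δ ^ α := fun s hs hsδ =>
    Real.rpow_le_rpow hs.le hsδ.le hα.le
  have hradial : ‖H (1 - r) - H (1 - r')‖ ≤ M / α * δ ^ α := by
    have hMα : 0 ≤ M / α := div_nonneg hM hα.le
    rcases le_total r r' with hrr | hrr
    · rw [norm_sub_rev]
      refine (norm_sub_le_of_radial hα hρ₂ hH hG hr hrr (hw'δ.trans_le hδ)).trans ?_
      nlinarith [hpow r' hr' hw'δ, Real.rpow_nonneg hr.le α]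
    · refine (norm_sub_le_of_radial hα hρ₂ hH hG hr' hrr (hwδ.trans_le hδ)).trans ?_
      nlinarith [hpow r hr hwδ, Real.rpow_nonneg hr'.le α]
  have hchord := norm_sub_le_of_chord hα.le hα₁ hM hH hG hw (hwδ.trans_le hδ)
  have hchord' := norm_sub_le_of_chord hα.le hα₁ hM hH hG hw' (hw'δ.trans_le hδ)
  calc dist (H w) (H w')
      ≤ dist (H w) (H (1 - r)) + dist (H (1 - r)) (H (1 - r')) + dist (H w') (H (1 - r')) := by
        simpa only [dist_comm (H w')] using dist_triangle4 _ _ _ _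
    _ ≤ 4 * M * δ ^ α + M / α * δ ^ α + 4 * M * δ ^ α := by
        simp only [dist_eq_norm]
        gcongr
        · exact hchord.trans (by gcongr)
        · exact hchord'.trans (by gcongr)
    _ = (8 * M + M / α) * δ ^ α := by ring

theorem exists_tendsto_of_deriv_isBigO (hα : 0 < α) (hα₁ : α ≤ 1)
    (hH : ∀ w ∈ unitDisk, HasDerivAt H (G w) w)
    (hG : G =O[𝓝[unitDisk] 1] fun w => ‖1 - w‖ ^ (α - 1)) :
    ∃ C, Tendsto H (𝓝[unitDisk] 1) (𝓝 C) := by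
  obtain ⟨M, hM, hMG⟩ := hG.exists_nonneg
  obtain ⟨ρ, hρ, hρ₂, hbound⟩ : ∃ ρ > 0, ρ ≤ 2 ∧
      ∀ w ∈ unitDisk, ‖1 - w‖ < ρ → ‖G w‖ ≤ M * ‖1 - w‖ ^ (α - 1) := by
    obtain ⟨ρ, hρ, hball⟩ := Metric.eventually_nhds_iff.mp
      (eventually_nhdsWithin_iff.mp hMG.bound)
    refine ⟨min ρ 2, by positivity, min_le_right _ _, fun w hw hwρ => ?_⟩
    have := hball (by rw [dist_eq_norm, norm_sub_rev]; exact hwρ.trans_le (min_le_left _ _)) hw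
    rwa [Real.norm_of_nonneg (Real.rpow_nonneg (norm_nonneg _) _)] at this
  have := nhdsWithin_unitDisk_one_neBot
  refine cauchy_map_iff_exists_tendsto.mp (Metric.cauchy_iff.mpr ⟨inferInstance, fun β hβ => ?_⟩)
  have hsmall : Tendsto (fun δ : ℝ => (8 * M + M / α) * δ ^ α) (𝓝 0) (𝓝 0) := by
    simpa [Real.zero_rpow hα.ne'] using
      ((Real.continuousAt_rpow_const 0 α (Or.inr hα.le)).tendsto).const_mul (8 * M + M / α)
  obtain ⟨δ, hδβ, hδ, hδρ⟩ := ((hsmall.eventually (gt_mem_nhds hβ)).filter_mono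
    nhdsWithin_le_nhds |>.and (Ioo_mem_nhdsGT hρ)).exists
  refine ⟨H '' (unitDisk ∩ {w | ‖1 - w‖ < δ}), image_mem_map (inter_mem self_mem_nhdsWithin
    (nhdsWithin_le_nhds (eventually_norm_one_sub_lt hδ))), ?_⟩
  rintro _ ⟨w, ⟨hw, hwδ⟩, rfl⟩ _ ⟨w', ⟨hw', hw'δ⟩, rfl⟩
  exact (dist_le_of_norm_one_sub_lt hα hα₁ hM hρ₂ hH hbound hδρ.le hw hw' hwδ hw'δ).trans_lt hδβ

end BoundaryLimit

lemma tendsto_add_one_mul_one_sub {h : ℂ → ℂ} {b c C h₀ : ℂ} (hb : b ≠ 0) {w : ℝ → ℂ}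
    (hw : Tendsto w atTop (𝓝 1)) (hw₁ : ∀ᶠ t in atTop, w t ≠ 1)
    (hshift : ∀ᶠ t in atTop, h (w t) = h₀ + t)
    (hH : Tendsto (fun t => koenigsRegularPart h b c (w t)) atTop (𝓝 C)) :
    Tendsto (fun t : ℝ => ((t : ℂ) + 1) * (1 - w t)) atTop (𝓝 (-1 / b)) := by
  have hu : Tendsto (fun t => 1 - w t) atTop (𝓝 0) := by simpa using hw.const_sub 1
  have hlim := (((hH.sub_const h₀).add_const 1).mul hu).add
    ((tendsto_mul_log_nhds_zero.comp hu).const_mul (c / b ^ 2)) |>.sub_const (1 / b)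
  rw [mul_zero, mul_zero, add_zero, zero_sub, ← neg_div] at hlim
  refine hlim.congr' ?_
  filter_upwards [hw₁, hshift] with t ht hst
  have hne : 1 - w t ≠ 0 := sub_ne_zero.mpr (Ne.symm ht)
  simp only [Function.comp_apply, koenigsRegularPart, hst]
  field_simp
  ring

lemma mem_slitPlane_of_tendsto_add_one_mul_one_sub {b : ℂ} (hb : b ≠ 0) {w : ℝ → ℂ}
    (hmem : ∀ᶠ t in atTop, w t ∈ unitDisk)
    (hq : Tendsto (fun t : ℝ => ((t : ℂ) + 1) * (1 - w t)) atTop (𝓝 (-1 / b))) :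
    -1 / b ∈ slitPlane := by
  refine mem_slitPlane_of_re_nonneg (ge_of_tendsto ((continuous_re.tendsto _).comp hq) ?_)
    (div_ne_zero (neg_ne_zero.mpr one_ne_zero) hb)
  filter_upwards [eventually_ge_atTop 0, hmem] with t ht hwt
  have := re_one_sub_pos_of_mem_unitDisk hwt
  rw [Function.comp_apply, show (t : ℂ) + 1 = ((t + 1 : ℝ) : ℂ) by push_cast; ring, re_ofReal_mul]
  positivity

theorem stmt9 (F : ℝ → ℂ → ℂ) (f h : ℂ → ℂ) (b c : ℂ) (ε : ℝ)
    (hsg : IsContinuousSemigroupOnDisk F f)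
    (hdw : HasDWPointOne F)
    (hnz : ∀ z ∈ unitDisk, f z ≠ 0)
    (hb : b ≠ 0) (hε : 0 < ε)
    (hrep : Tendsto
      (fun z : ℂ => (f z - b * (z - 1) ^ 2 - c * (z - 1) ^ 3) / (z - 1) ^ ((3 + ε : ℝ) : ℂ))
      (𝓝[unitDisk] (1 : ℂ)) (𝓝 0))
    (hK : IsKoenigsFunction f h) :
    ∃ A : ℂ, ∀ z ∈ unitDisk,
      Tendsto (fun t : ℝ =>
          1 / (1 - F t z) + b * (t : ℂ) + (c / b) * (Real.log (t + 1) : ℂ) + b * h z)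
        atTop (𝓝 A) := by
  obtain ⟨C, hC⟩ := exists_tendsto_of_deriv_isBigO (lt_min hε one_pos) (min_le_right ε 1)
    (fun w hw => hasDerivAt_koenigsRegularPart c hb hK hw)
    (deriv_koenigsRegularPart_isBigO hb hε (eventually_norm_remainder_le hrep))
  refine ⟨b * C + c / b * log (-1 / b), fun z hz => ?_⟩
  have hmem : ∀ᶠ t in atTop, F t z ∈ unitDisk :=
    (eventually_ge_atTop 0).mono fun t ht => hsg.mapsTo t ht hz
  have hshift : ∀ᶠ t : ℝ in atTop, h (F t z) = h z + t :=
    (eventually_ge_atTop 0).mono fun t ht => hK.comp_semigroup hsg hnz hz ht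
  have hH : Tendsto (fun t => koenigsRegularPart h b c (F t z)) atTop (𝓝 C) :=
    hC.comp (tendsto_nhdsWithin_iff.mpr ⟨hdw z hz, hmem⟩)
  have hq := tendsto_add_one_mul_one_sub hb (hdw z hz)
    (hmem.mono fun t ht => (sub_ne_zero.mp (one_sub_ne_zero_of_mem_unitDisk ht)).symm) hshift hH
  have hslit := mem_slitPlane_of_tendsto_add_one_mul_one_sub hb hmem hq
  refine ((hH.const_mul b).add ((hq.clog hslit).const_mul (c / b))).congr' ?_
  filter_upwards [eventually_ge_atTop 0, hmem, hshift] with t ht hwt hst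
  have hne := one_sub_ne_zero_of_mem_unitDisk hwt
  rw [show (t : ℂ) + 1 = ((t + 1 : ℝ) : ℂ) by push_cast; ring,
    log_ofReal_mul (by linarith) hne, koenigsRegularPart, hst]
  field_simp
  ring
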